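/- arXiv:math/0611020 — 2 statements merged into one kernel-verified Lean document; each statement's English description precedes it below -/
import Mathlib

section
/- Let V be a finite set of monomials of degree d in K[x_1,...,x_n]. Then V is strongly stable (i.e., u·x_q ∈ V and 1 ≤ p < q imply u·x_p ∈ V) if and only if (i) each set D_k(V) = {u/x_k : u ∈ V, max(u) = k} is strongly stable for k = 1,...,n, and (ii) M_{≤k-1}(D_k(V)) ⊆ D_{k-1}(V) for k = 2,...,n, where M_{≤j}(W) denotes the set of monomials u ∈ W with max(u) ≤ j. -/
set_option synthInstance.maxHeartbeats 1000000
set_option maxHeartbeats 1000000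

open MvPolynomial

namespace Paper

/-! ### Combinatorics of monomials -/

/-- a monomial in `n` variables, encoded by its exponent vector -/
abbrev Mono (n : ℕ) := Fin n →₀ ℕ

/-- total degree of a monomial -/
def mdeg {n : ℕ} (u : Mono n) : ℕ := u.sum fun _ e => e

/-- `maxVar u` is the largest index (1-indexed) of a variable dividing `u`; `maxVar 1 = 0`. -/
def maxVar {n : ℕ} (u : Mono n) : ℕ := u.support.sup fun i => (i : ℕ) + 1

/-- `LexGT u v` : `u >_lex v` (lexicographic order with `x_1 > x_2 > ⋯ > x_n`). -/
def LexGT {n : ℕ} (u v : Mono n) : Prop :=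
  ∃ i : Fin n, v i < u i ∧ ∀ j : Fin n, j < i → u j = v j

/-- strongly stable set of monomials -/
def SStableSet {n : ℕ} (V : Set (Mono n)) : Prop :=
  ∀ u : Mono n, ∀ p q : Fin n, p < q → u + Finsupp.single q 1 ∈ V →
    u + Finsupp.single p 1 ∈ V

/-- `Dk V k = { u / x_k : u ∈ V, max(u) = k }` (here `k : Fin n` is the 0-indexed variable,
corresponding to the 1-indexed variable `k+1`) -/
def Dk {n : ℕ} (V : Set (Mono n)) (k : Fin n) : Set (Mono n) :=
  {w | w + Finsupp.single k 1 ∈ V ∧ maxVar (w + Finsupp.single k 1) = (k : ℕ) + 1}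

/-- `Mle j W = { u ∈ W : max(u) ≤ j }` -/
def Mle {n : ℕ} (j : ℕ) (W : Set (Mono n)) : Set (Mono n) := {u ∈ W | maxVar u ≤ j}

/-- `L` is a lexsegment set of monomials inside `K[x_1,…,x_k]`. -/
def LexSegIn {n : ℕ} (k : ℕ) (L : Set (Mono n)) : Prop :=
  (∀ u ∈ L, maxVar u ≤ k) ∧
  ∀ u ∈ L, ∀ v : Mono n, mdeg v = mdeg u → maxVar v ≤ k → LexGT v u → v ∈ L

/-- `V` is a `d`-linear lexsegment set of monomials of degree `d`. -/
def DLinearLexSeg {n : ℕ} (d : ℕ) (V : Set (Mono n)) : Prop :=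
  (∀ u ∈ V, mdeg u = d) ∧ SStableSet V ∧
    ∀ k : Fin n, LexSegIn ((k : ℕ) + 1) (Dk V k)

/- Strong stability only needs the elementary moves `x_q ↦ x_{q-1}`. For such a move
on `u·x_q ∈ V`, let `x_k` be the largest variable of `u·x_q`. If `x_k` divides `u`, the move
happens inside `D_k(V)`; otherwise `max(u) ≤ q`, so `u ∈ M_{≤q}(D_q(V)) ⊆ D_{q-1}(V)`,
which says exactly that `u·x_{q-1} ∈ V`. -/

section Monomials

variable {n : ℕ}

lemma maxVar_le_iff (u : Mono n) (m : ℕ) :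
    maxVar u ≤ m ↔ ∀ i : Fin n, u i ≠ 0 → (i : ℕ) + 1 ≤ m := by
  simp [maxVar, Finset.sup_le_iff, Finsupp.mem_support_iff]

lemma le_maxVar {u : Mono n} {i : Fin n} (h : u i ≠ 0) : (i : ℕ) + 1 ≤ maxVar u :=
  Finset.le_sup (f := fun i : Fin n => (i : ℕ) + 1) (Finsupp.mem_support_iff.mpr h)

lemma exists_maxVar_eq {u : Mono n} (h : 0 < maxVar u) :
    ∃ i : Fin n, u i ≠ 0 ∧ (i : ℕ) + 1 = maxVar u := by
  have hne : u.support.Nonempty := by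
    rw [Finset.nonempty_iff_ne_empty]
    rintro hu
    simp [maxVar, hu] at h
  obtain ⟨i, hi, hsup⟩ :=
    Finset.exists_mem_eq_sup u.support hne (fun i : Fin n => (i : ℕ) + 1)
  exact ⟨i, Finsupp.mem_support_iff.mp hi, hsup.symm⟩

lemma maxVar_add_single (w : Mono n) (k : Fin n) :
    maxVar (w + Finsupp.single k 1) = max (maxVar w) ((k : ℕ) + 1) := by
  apply le_antisymm
  · rw [maxVar_le_iff]
    intro i hi
    rcases eq_or_ne i k with rfl | hik
    · exact le_max_right _ _
    · rw [Finsupp.add_apply, Finsupp.single_eq_of_ne' hik.symm, add_zero] at hi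
      exact le_max_of_le_left (le_maxVar hi)
  · refine max_le ((maxVar_le_iff _ _).mpr fun i hi => le_maxVar ?_) (le_maxVar (by simp))
    simp [hi]

lemma sub_single_add_single {u : Mono n} {k : Fin n} (h : u k ≠ 0) :
    u - Finsupp.single k 1 + Finsupp.single k 1 = u :=
  tsub_add_cancel_of_le (Finsupp.single_le_iff.mpr (Nat.one_le_iff_ne_zero.mpr h))

end Monomials

section StronglyStable

variable {n : ℕ} {V : Set (Mono n)}

lemma mem_Dk_iff {w : Mono n} {k : Fin n} :
    w ∈ Dk V k ↔ w + Finsupp.single k 1 ∈ V ∧ maxVar w ≤ (k : ℕ) + 1 := by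
  show (_ ∧ _) ↔ _
  rw [maxVar_add_single, max_eq_right_iff]

lemma sStableSet_of_add_single_pred
    (h : ∀ (u : Mono n) (q : Fin n), 0 < (q : ℕ) →
      u + Finsupp.single q 1 ∈ V →
        u + Finsupp.single ⟨(q : ℕ) - 1, Nat.sub_lt_of_lt q.isLt⟩ 1 ∈ V) :
    SStableSet V := by
  rintro u p ⟨q, hqn⟩ hpq
  replace hpq : (p : ℕ) + 1 ≤ q := hpq
  induction q, hpq using Nat.le_induction with
  | base => exact h u ⟨p + 1, hqn⟩ p.succ_pos
  | succ q _ ih => exact fun hmem => ih (by omega) (h u ⟨q + 1, hqn⟩ q.succ_pos hmem)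

lemma SStableSet.sStableSet_Dk (hV : SStableSet V) (k : Fin n) : SStableSet (Dk V k) := by
  intro u p q hpq hu
  rw [mem_Dk_iff, add_right_comm] at hu ⊢
  refine ⟨hV _ p q hpq hu.1, ?_⟩
  rw [maxVar_add_single] at hu ⊢
  have : (p : ℕ) < q := hpq
  omega

lemma SStableSet.Mle_Dk_subset (hV : SStableSet V) (k : Fin n) (hk : 0 < (k : ℕ)) :
    Mle (k : ℕ) (Dk V k) ⊆ Dk V ⟨(k : ℕ) - 1, Nat.sub_lt_of_lt k.isLt⟩ := by
  rintro u ⟨hu, humax⟩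
  rw [mem_Dk_iff] at hu ⊢
  exact ⟨hV u _ k (Fin.lt_def.mpr (by simp; omega)) hu.1, by simp; omega⟩

lemma sStableSet_of_Dk (hD : ∀ k : Fin n, SStableSet (Dk V k))
    (hM : ∀ k : Fin n, 0 < (k : ℕ) →
      Mle (k : ℕ) (Dk V k) ⊆ Dk V ⟨(k : ℕ) - 1, Nat.sub_lt_of_lt k.isLt⟩) :
    SStableSet V := by
  refine sStableSet_of_add_single_pred fun u q hq hmem => ?_
  set q' : Fin n := ⟨(q : ℕ) - 1, Nat.sub_lt_of_lt q.isLt⟩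
  have hq'q : q' < q := Fin.lt_def.mpr (by simp [q']; omega)
  by_cases hu : maxVar u ≤ (q : ℕ)
  · have hDq : u ∈ Dk V q := mem_Dk_iff.mpr ⟨hmem, by omega⟩
    exact (mem_Dk_iff.mp (hM q hq ⟨hDq, hu⟩)).1
  · obtain ⟨k, huk, hkmax⟩ := exists_maxVar_eq (u := u) (by omega)
    have hcancel := sub_single_add_single huk
    have hw : u - Finsupp.single k 1 + Finsupp.single q 1 ∈ Dk V k := by
      refine ⟨?_, ?_⟩ <;> rw [add_right_comm, hcancel]
      · exact hmem
      · rw [maxVar_add_single]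
        omega
    have := (hD k _ q' q hq'q hw).1
    rwa [add_right_comm, hcancel] at this

end StronglyStable

/-- Lemma: characterization of strongly stable sets via `D_k` and `M_{≤k-1}`. -/
theorem stmt0 (n : ℕ) (V : Finset (Mono n)) :
    SStableSet (V : Set (Mono n)) ↔
      ((∀ k : Fin n, SStableSet (Dk (V : Set (Mono n)) k)) ∧
       ∀ k : Fin n, ∀ hk : 0 < (k : ℕ),
         Mle ((k : ℕ)) (Dk (V : Set (Mono n)) k) ⊆
           Dk (V : Set (Mono n)) ⟨(k : ℕ) - 1, by omega⟩) := by
  exact ⟨fun hV => ⟨hV.sStableSet_Dk, hV.Mle_Dk_subset⟩,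
    fun ⟨hD, hM⟩ => sStableSet_of_Dk hD hM⟩

end Paper
end

section
/- Every d-lexsegment monomial ideal I in S = K[x_1,...,x_n] is strongly stable and d-regular (i.e., reg(I) ≤ d). -/
set_option synthInstance.maxHeartbeats 1000000
set_option maxHeartbeats 1000000

open MvPolynomial

namespace Paper

/-! ### Ideal-level notions -/

variable {n : ℕ} {K : Type} [Field K]

/-- `I` is a monomial ideal. -/
def MonomialIdeal (I : Ideal (MvPolynomial (Fin n) K)) : Prop :=
  ∀ p ∈ I, ∀ m ∈ p.support, (monomial m (1 : K)) ∈ I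

/-- `u` is a minimal monomial generator of the monomial ideal `I`. -/
def MinGen (I : Ideal (MvPolynomial (Fin n) K)) (u : Mono n) : Prop :=
  monomial u (1 : K) ∈ I ∧ ∀ v : Mono n, v ≤ u → v ≠ u → monomial v (1 : K) ∉ I

/-- stable monomial ideal -/
def StableIdeal (I : Ideal (MvPolynomial (Fin n) K)) : Prop :=
  MonomialIdeal I ∧
  ∀ u : Mono n, ∀ q : Fin n, maxVar u = (q : ℕ) + 1 → monomial u (1 : K) ∈ I →
    ∀ p : Fin n, p < q →
      monomial (u - Finsupp.single q 1 + Finsupp.single p 1) (1 : K) ∈ I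

/-- strongly stable monomial ideal -/
def SStableIdeal (I : Ideal (MvPolynomial (Fin n) K)) : Prop :=
  MonomialIdeal I ∧
  ∀ u : Mono n, ∀ q : Fin n, 0 < u q → monomial u (1 : K) ∈ I →
    ∀ p : Fin n, p < q →
      monomial (u - Finsupp.single q 1 + Finsupp.single p 1) (1 : K) ∈ I

/-- the set of (exponent vectors of) monomials of degree `k` lying in `I` -/
def monSlice (I : Ideal (MvPolynomial (Fin n) K)) (k : ℕ) : Set (Mono n) :=
  {u | mdeg u = k ∧ monomial u (1 : K) ∈ I}

/-- homogeneous (graded) ideal -/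
def HomIdeal (I : Ideal (MvPolynomial (Fin n) K)) : Prop :=
  ∀ p ∈ I, ∀ k : ℕ, homogeneousComponent k p ∈ I

/-! ### Graded components and Hilbert functions -/

/-- the degree-`z` homogeneous component of `I`, as a `K`-subspace -/
noncomputable def hComp (I : Ideal (MvPolynomial (Fin n) K)) (z : ℤ) :
    Submodule K (MvPolynomial (Fin n) K) :=
  if 0 ≤ z then
    (Submodule.restrictScalars K I) ⊓ homogeneousSubmodule (Fin n) K z.toNat
  else ⊥

/-- Hilbert function `H(I,t)` of the ideal `I` -/
noncomputable def hfI (I : Ideal (MvPolynomial (Fin n) K)) (t : ℕ) : ℕ :=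
  Module.finrank K (hComp I (t : ℤ))

/-- Hilbert function `H(S/I,t)` of the quotient `S/I` -/
noncomputable def hfQ (I : Ideal (MvPolynomial (Fin n) K)) (t : ℕ) : ℕ :=
  Module.finrank K
    (homogeneousSubmodule (Fin n) K t ⧸
      Submodule.comap (homogeneousSubmodule (Fin n) K t).subtype
        (Submodule.restrictScalars K I))

/-! ### Graded Betti numbers via the Koszul complex, and regularity -/

lemma mulX_mem (I : Ideal (MvPolynomial (Fin n) K)) (k : Fin n) (z : ℤ)
    {p : MvPolynomial (Fin n) K} (hp : p ∈ hComp I z) : X k * p ∈ hComp I (z + 1) := by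
  unfold hComp at *
  by_cases h : 0 ≤ z
  · simp only [if_pos h] at hp
    have h1 : (0:ℤ) ≤ z + 1 := by omega
    simp only [if_pos h1]
    refine ⟨Ideal.mul_mem_left _ _ hp.1, ?_⟩
    have h2 : p.IsHomogeneous z.toNat := (mem_homogeneousSubmodule _ _).1 hp.2
    have h3 := (isHomogeneous_X K k).mul h2
    have hz : (z + 1).toNat = 1 + z.toNat := by omega
    exact (mem_homogeneousSubmodule _ _).2 (hz ▸ h3)
  · simp only [if_neg h] at hp
    simp only [Submodule.mem_bot] at hp
    subst hp
    simp

/-- multiplication by `X k` as a linear map between graded components of `I` -/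
noncomputable def kosMulX (I : Ideal (MvPolynomial (Fin n) K)) (k : Fin n) (z : ℤ) :
    hComp I z →ₗ[K] hComp I (z + 1) :=
  LinearMap.codRestrict _ ((LinearMap.mulLeft K (X k)).comp (hComp I z).subtype)
    fun p => mulX_mem I k z p.2

/-- transport along an equality of degrees -/
noncomputable def hCompCast (I : Ideal (MvPolynomial (Fin n) K)) {z z' : ℤ} (h : z = z') :
    hComp I z →ₗ[K] hComp I z' :=
  Submodule.inclusion (le_of_eq (by rw [h]))

/-- the degree-`j` strand of the Koszul differential
`I ⊗ Λ^{i+1} K^n → I ⊗ Λ^i K^n` of `I` (tensored over `S` with the Koszul complex on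
`x_1,…,x_n`), whose homology computes `Tor_•(I, K)` with its internal grading. -/
noncomputable def kosD (I : Ideal (MvPolynomial (Fin n) K)) (i : ℕ) (j : ℤ) :
    ({T : Finset (Fin n) // T.card = i + 1} → hComp I (j - (i + 1))) →ₗ[K]
    ({T : Finset (Fin n) // T.card = i} → hComp I (j - i)) :=
  LinearMap.pi fun T =>
    ∑ k ∈ ((T : Finset (Fin n))ᶜ).attach,
      ((-1 : K) ^ (((T : Finset (Fin n)).filter fun a => a < (k : Fin n)).card)) •
        ((hCompCast I (by omega) :
            hComp I (j - ((i : ℤ) + 1) + 1) →ₗ[K] hComp I (j - i)) ∘ₗ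
          (kosMulX I k (j - ((i : ℤ) + 1))) ∘ₗ
          (LinearMap.proj (⟨insert (k : Fin n) (T : Finset (Fin n)), by
              rw [Finset.card_insert_of_notMem (Finset.mem_compl.mp k.2), T.2]⟩ :
            {T : Finset (Fin n) // T.card = i + 1})))

/-- the cycles of the Koszul complex of `I` at homological position `i`, internal degree `j` -/
noncomputable def bettiKer (I : Ideal (MvPolynomial (Fin n) K)) (i : ℕ) (j : ℤ) :
    Submodule K ({T : Finset (Fin n) // T.card = i} → hComp I (j - i)) :=
  match i with
  | 0 => ⊤
  | i' + 1 => LinearMap.ker (kosD I i' j)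

/-- the graded Betti number `β_{ij}(I) = dim_K Tor_i(I,K)_j`, computed as the dimension of
the homology of the degree-`j` strand of the Koszul complex:
`dim ker - dim (im ⊓ ker)`. -/
noncomputable def betti (I : Ideal (MvPolynomial (Fin n) K)) (i : ℕ) (j : ℤ) : ℕ :=
  Module.finrank K (bettiKer I i j) -
    Module.finrank K (LinearMap.range (kosD I i j) ⊓ bettiKer I i j :
      Submodule K ({T : Finset (Fin n) // T.card = i} → hComp I (j - i)))

/-- Castelnuovo–Mumford regularity `reg(I) = max{k : β_{i,i+k}(I) ≠ 0 for some i}` -/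
noncomputable def reg (I : Ideal (MvPolynomial (Fin n) K)) : ℤ :=
  sSup {k : ℤ | ∃ i : ℕ, betti I i ((i : ℤ) + k) ≠ 0}

/-- lexsegment ideal -/
def LexIdeal (I : Ideal (MvPolynomial (Fin n) K)) : Prop :=
  MonomialIdeal I ∧ ∀ k : ℕ, LexSegIn n (monSlice I k)

/-- `d`-lexsegment ideal: `I_{≥d}` is generated by a `d`-linear lexsegment set of monomials
of degree `d`, and `I_k` is lexsegment for all `k < d`. -/
def DLexIdeal (d : ℕ) (I : Ideal (MvPolynomial (Fin n) K)) : Prop :=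
  MonomialIdeal I ∧
  DLinearLexSeg d (monSlice I d) ∧
  (∀ u : Mono n, d ≤ mdeg u → monomial u (1 : K) ∈ I → ∃ v ∈ monSlice I d, v ≤ u) ∧
  (∀ k : ℕ, k < d → LexSegIn n (monSlice I k))

/-!
Below degree `d` strong stability is the lexsegment property, since an exchange
`u · x_p / x_q` with `p < q` is lex-larger than `u`. From degree `d` on, every monomial of `I`
is a multiple of a degree-`d` generator `g`, and either `x_q ∤ g` or the strongly stable
generating set absorbs the exchange.

The same generators make `I` stable above degree `d`: a monomial of `I` of degree `> d`
stays in `I` after dividing by its largest variable. Hence the standard contraction of the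
Koszul complex on `x_1, …, x_n` (divide by the largest variable of the monomial when it exceeds
every index of the wedge factor, and add that index) maps the strands of `I` in internal degree
`> d` into `I`. On such strands every cycle is therefore a boundary, so `β_{i,i+k}(I) = 0`
for `k > d`.
-/

section Monomials
variable {n : ℕ}

lemma mdeg_zero : mdeg (0 : Mono n) = 0 := rfl

lemma mdeg_add (u v : Mono n) : mdeg (u + v) = mdeg u + mdeg v := map_add Finsupp.degree u v

lemma mdeg_single (i : Fin n) (e : ℕ) : mdeg (Finsupp.single i e) = e :=
  Finsupp.degree_single i e

lemma mdeg_eq_sum (u : Mono n) : mdeg u = ∑ i, u i := Finsupp.degree_eq_sum u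

lemma maxVar_le (u : Mono n) : maxVar u ≤ n := Finset.sup_le fun i _ => i.isLt

lemma exists_lt_of_mdeg_le {u v : Mono n} {q : Fin n} (hdeg : mdeg v ≤ mdeg u)
    (hq : u q < v q) : ∃ p, v p < u p := by
  by_contra! h
  have := Finset.sum_lt_sum (fun p _ => h p) ⟨q, Finset.mem_univ q, hq⟩
  rw [← mdeg_eq_sum, ← mdeg_eq_sum] at this
  omega

lemma mdeg_exchange {u : Mono n} {p q : Fin n} (hq : 0 < u q) :
    mdeg (u - Finsupp.single q 1 + Finsupp.single p 1) = mdeg u := by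
  have hu : u - Finsupp.single q 1 + Finsupp.single q 1 = u :=
    tsub_add_cancel_of_le (Finsupp.single_le_iff.mpr hq)
  conv_rhs => rw [← hu]
  rw [mdeg_add, mdeg_add, mdeg_single, mdeg_single]

lemma lexGT_exchange (u : Mono n) {p q : Fin n} (hpq : p < q) :
    LexGT (u - Finsupp.single q 1 + Finsupp.single p 1) u := by
  refine ⟨p, ?_, fun j hj => ?_⟩
  · simp [hpq.ne']
  · simp [hj.ne', (hj.trans hpq).ne']

lemma exchange_le_exchange {u v : Mono n} (h : v ≤ u) (p q : Fin n) :
    v - Finsupp.single q 1 + Finsupp.single p 1 ≤ u - Finsupp.single q 1 + Finsupp.single p 1 :=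
  add_le_add_left (tsub_le_tsub_right h _) _

lemma le_tsub_single_of_eq_zero {u v : Mono n} (h : v ≤ u) {q : Fin n} (hq : v q = 0) :
    v ≤ u - Finsupp.single q 1 := by
  intro s
  have := h s
  by_cases hs : q = s <;> simp_all

end Monomials

section MonomialIdeals
variable {n d : ℕ} {K : Type} [Field K] {I : Ideal (MvPolynomial (Fin n) K)}

lemma monomial_mem_of_le {u v : Mono n} (hle : v ≤ u) (hv : monomial v (1 : K) ∈ I) :
    monomial u (1 : K) ∈ I := by
  rw [← tsub_add_cancel_of_le hle, ← mul_one (1 : K), ← monomial_mul]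
  exact I.mul_mem_left _ hv

lemma mem_of_forall_monomial_mem {p : MvPolynomial (Fin n) K}
    (h : ∀ a ∈ p.support, monomial a (1 : K) ∈ I) : p ∈ I := by
  rw [p.as_sum]
  refine I.sum_mem fun a ha => ?_
  rw [← mul_one (coeff a p), ← C_mul_monomial]
  exact I.mul_mem_left _ (h a ha)

lemma DLexIdeal.sstableIdeal (hI : DLexIdeal d I) : SStableIdeal I := by
  obtain ⟨hmon, ⟨-, hstable, -⟩, hgen, hlex⟩ := hI
  refine ⟨hmon, fun u q hq hu p hpq => ?_⟩
  rcases lt_or_ge (mdeg u) d with hlow | hhigh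
  · exact ((hlex _ hlow).2 u ⟨rfl, hu⟩ _ (mdeg_exchange hq) (maxVar_le _)
      (lexGT_exchange u hpq)).2
  · obtain ⟨v, hv, hvu⟩ := hgen u hhigh hu
    by_cases hvq : v q = 0
    · exact monomial_mem_of_le (le_add_right (le_tsub_single_of_eq_zero hvu hvq)) hv.2
    · have hv' : v - Finsupp.single q 1 + Finsupp.single q 1 ∈ monSlice I d := by
        rwa [tsub_add_cancel_of_le (Finsupp.single_le_iff.mpr (Nat.pos_of_ne_zero hvq))]
      exact monomial_mem_of_le (exchange_le_exchange hvu p q) (hstable _ p q hpq hv').2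

lemma DLexIdeal.monomial_mem_of_single_add_mem (hI : DLexIdeal d I) {a : Mono n} {v : Fin n}
    (hdeg : d ≤ mdeg a) (hmax : ∀ s, v < s → a s = 0)
    (ha : monomial (Finsupp.single v 1 + a) (1 : K) ∈ I) : monomial a (1 : K) ∈ I := by
  obtain ⟨-, ⟨-, hstable, -⟩, hgen, -⟩ := hI
  obtain ⟨g, hg, hga⟩ := hgen _ (by rw [mdeg_add]; omega) ha
  have hgs : ∀ s, s ≠ v → g s ≤ a s := fun s hs => by
    simpa [Finsupp.single_apply, Ne.symm hs] using hga s
  by_cases hgv : g v ≤ a v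
  · refine monomial_mem_of_le (fun s => ?_) hg.2
    rcases eq_or_ne s v with rfl | hs
    exacts [hgv, hgs s hs]
  -- Otherwise `g = x_v · g'`, and since `deg g ≤ deg a` some `x_p` with `p < v` occurs in `a`
  -- more often than in `g`: the exchange `g · x_p / x_v` is a generator dividing `a`.
  obtain ⟨p, hp⟩ := exists_lt_of_mdeg_le (hg.1.trans_le hdeg) (not_le.mp hgv)
  have hpv : p < v := by
    refine lt_of_le_of_ne (not_lt.mp fun hvp => ?_) fun hpv => hgv (hpv ▸ hp.le)
    have := hmax p hvp
    omega
  have hg' : g - Finsupp.single v 1 + Finsupp.single v 1 ∈ monSlice I d := by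
    rwa [tsub_add_cancel_of_le (Finsupp.single_le_iff.mpr (by omega))]
  refine monomial_mem_of_le (fun s => ?_) (hstable _ p v hpv hg').2
  have hga' := hga s
  simp only [Finsupp.coe_add, Finsupp.coe_tsub, Pi.add_apply, Pi.sub_apply,
    Finsupp.single_apply] at hga' ⊢
  split_ifs at hga' ⊢ <;> subst_vars <;> omega

/-- In the language of monomials `u = x_v · a` with `max(u) = v`: above degree `d`, dividing a
monomial of `I` by its largest variable stays in `I`. -/
def StableAboveDegree (d : ℕ) (I : Ideal (MvPolynomial (Fin n) K)) : Prop :=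
  MonomialIdeal I ∧ ∀ (a : Mono n) (v : Fin n), d ≤ mdeg a → (∀ s, v < s → a s = 0) →
    monomial (Finsupp.single v 1 + a) (1 : K) ∈ I → monomial a (1 : K) ∈ I

lemma DLexIdeal.stableAboveDegree (hI : DLexIdeal d I) : StableAboveDegree d I :=
  ⟨hI.1, fun _ _ => hI.monomial_mem_of_single_add_mem⟩

end MonomialIdeals

section KoszulContraction
variable {n : ℕ} {R : Type*} [CommRing R]

def koszulSign (T : Finset (Fin n)) (t : Fin n) : R := (-1) ^ (T.filter fun a => a < t).card

noncomputable def koszulBoundary (F : Finset (Fin n) → MvPolynomial (Fin n) R)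
    (T : Finset (Fin n)) : MvPolynomial (Fin n) R :=
  ∑ t ∈ Tᶜ, (koszulSign T t : R) • (X t * F (insert t T))

noncomputable def filterMonomials (P : Mono n → Prop) [DecidablePred P]
    (p : MvPolynomial (Fin n) R) : MvPolynomial (Fin n) R :=
  ∑ a ∈ p.support with P a, monomial a (coeff a p)

/-- The coordinates of the contraction `u e_S ↦ (u / x_m) e_{S ∪ {m}}`, where `m` is the largest
variable of `u`; terms with `u = 1` or `m ≤ max S` are sent to `0`. -/
noncomputable def koszulContraction (Z : Finset (Fin n) → MvPolynomial (Fin n) R)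
    (T : Finset (Fin n)) : MvPolynomial (Fin n) R :=
  if h : T.Nonempty then
    filterMonomials (fun a => ∀ s, T.max' h < s → a s = 0)
      (divMonomial (Z (T.erase (T.max' h))) (Finsupp.single (T.max' h) 1))
  else 0

lemma coeff_koszulBoundary (F : Finset (Fin n) → MvPolynomial (Fin n) R) (T : Finset (Fin n))
    (a : Mono n) :
    coeff a (koszulBoundary F T) =
      ∑ t ∈ Tᶜ, koszulSign T t * coeff a (X t * F (insert t T)) := by
  simp only [koszulBoundary, coeff_sum, coeff_smul, smul_eq_mul]

lemma koszulBoundary_smul (c : R) (F : Finset (Fin n) → MvPolynomial (Fin n) R)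
    (T : Finset (Fin n)) :
    koszulBoundary (fun S => c • F S) T = c • koszulBoundary F T := by
  simp only [koszulBoundary, Finset.smul_sum, mul_smul_comm, smul_comm c]

lemma coeff_filterMonomials (P : Mono n → Prop) [DecidablePred P] (p : MvPolynomial (Fin n) R)
    (a : Mono n) : coeff a (filterMonomials P p) = if P a then coeff a p else 0 := by
  simp only [filterMonomials, coeff_sum, coeff_monomial, Finset.sum_ite_eq', Finset.mem_filter,
    mem_support_iff]
  by_cases h : coeff a p = 0 <;> simp [h]

lemma coeff_koszulContraction (Z : Finset (Fin n) → MvPolynomial (Fin n) R)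
    {T : Finset (Fin n)} {v : Fin n} (hv : v ∈ T) (hmax : ∀ x ∈ T, x ≤ v) (a : Mono n) :
    coeff a (koszulContraction Z T) =
      if ∀ s, v < s → a s = 0 then coeff (Finsupp.single v 1 + a) (Z (T.erase v)) else 0 := by
  have hne : T.Nonempty := ⟨v, hv⟩
  obtain rfl : T.max' hne = v := le_antisymm (T.max'_le hne v hmax) (T.le_max' v hv)
  rw [koszulContraction, dif_pos hne, coeff_filterMonomials, coeff_divMonomial]

lemma koszulSign_of_forall_lt {T : Finset (Fin n)} {v : Fin n} (h : ∀ x ∈ T, x < v) :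
    (koszulSign T v : R) = (-1) ^ T.card := by
  rw [koszulSign, Finset.filter_true_of_mem h]

lemma koszulSign_erase {T : Finset (Fin n)} {t v : Fin n} (h : t < v) :
    (koszulSign (T.erase v) t : R) = koszulSign T t := by
  rw [koszulSign, koszulSign, Finset.filter_erase,
    Finset.erase_eq_of_notMem fun hv => (Finset.mem_filter.mp hv).2.not_gt h]

lemma coeff_koszulBoundary_koszulContraction_of_notMem
    (Z : Finset (Fin n) → MvPolynomial (Fin n) R) {T : Finset (Fin n)} {a : Mono n} {v : Fin n}
    (hav : a v ≠ 0) (ha : ∀ s, v < s → a s = 0) (hT : ∀ x ∈ T, x < v) :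
    coeff a (koszulBoundary (koszulContraction Z) T) = (-1) ^ T.card * coeff a (Z T) := by
  have hvT : v ∉ T := fun h => lt_irrefl _ (hT v h)
  rw [coeff_koszulBoundary, Finset.sum_eq_single_of_mem v (Finset.mem_compl.mpr hvT)]
  · have hsplit : a = Finsupp.single v 1 + (a - Finsupp.single v 1) :=
      (add_tsub_cancel_of_le (Finsupp.single_le_iff.mpr (Nat.pos_of_ne_zero hav))).symm
    have hmax : ∀ x ∈ insert v T, x ≤ v :=
      Finset.forall_mem_insert _ _ _ |>.mpr ⟨le_rfl, fun x hx => (hT x hx).le⟩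
    conv_lhs => rw [hsplit]
    rw [koszulSign_of_forall_lt hT, coeff_X_mul,
      coeff_koszulContraction Z (Finset.mem_insert_self v T) hmax, if_pos, ← hsplit,
      Finset.erase_insert hvT]
    intro s hs
    simp [ha s hs]
  · intro t _ htv
    rw [coeff_X_mul']
    split_ifs with hta
    · have htlt : t < v :=
        lt_of_le_of_ne (not_lt.mp fun h => Finsupp.mem_support_iff.mp hta (ha t h)) htv
      have hne : (insert t T).Nonempty := Finset.insert_nonempty t T
      have hmv : (insert t T).max' hne < v := (Finset.max'_lt_iff _ hne).mpr
        (Finset.forall_mem_insert _ _ _ |>.mpr ⟨htlt, hT⟩)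
      rw [coeff_koszulContraction Z ((insert t T).max'_mem hne) ((insert t T).le_max' · ·),
        if_neg fun h => hav (by simpa [Finsupp.single_apply, htv] using h v hmv), mul_zero]
    · rw [mul_zero]

lemma koszulSign_mul_coeff_X_mul_koszulContraction
    (Z : Finset (Fin n) → MvPolynomial (Fin n) R) {T : Finset (Fin n)} {a : Mono n}
    {t v : Fin n} (hvT : v ∈ T) (ha : ∀ s, v < s → a s = 0) (hT : ∀ x ∈ T, x ≤ v)
    (htT : t ∉ T) :
    koszulSign T t * coeff a (X t * koszulContraction Z (insert t T)) =
      koszulSign (T.erase v) t *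
        coeff (Finsupp.single v 1 + a) (X t * Z (insert t (T.erase v))) := by
  have htv : t ≠ v := fun h => htT (h ▸ hvT)
  rw [coeff_X_mul', coeff_X_mul']
  by_cases hat : a t = 0
  · rw [if_neg (by simpa using hat), if_neg (by simpa [Finsupp.single_apply, htv.symm] using hat),
      mul_zero, mul_zero]
  have htlt : t < v := lt_of_le_of_ne (not_lt.mp fun h => hat (ha t h)) htv
  have hmax : ∀ x ∈ insert t T, x ≤ v :=
    Finset.forall_mem_insert _ _ _ |>.mpr ⟨htlt.le, hT⟩
  rw [if_pos (by simpa using hat), if_pos (by simpa [Finsupp.single_apply, htv.symm] using hat),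
    coeff_koszulContraction Z (Finset.mem_insert_of_mem hvT) hmax,
    if_pos fun s hs => by simp [ha s hs], Finset.erase_insert_of_ne htv, koszulSign_erase htlt,
    add_tsub_assoc_of_le (Finsupp.single_le_iff.mpr (Nat.pos_of_ne_zero hat))]

lemma coeff_koszulBoundary_koszulContraction_of_mem
    (Z : Finset (Fin n) → MvPolynomial (Fin n) R) {T : Finset (Fin n)} {a : Mono n} {v : Fin n}
    (hvT : v ∈ T) (ha : ∀ s, v < s → a s = 0) (hT : ∀ x ∈ T, x ≤ v)
    (hcyc : koszulBoundary Z (T.erase v) = 0) :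
    coeff a (koszulBoundary (koszulContraction Z) T) = (-1) ^ T.card * coeff a (Z T) := by
  have hlt : ∀ x ∈ T.erase v, x < v := fun x hx =>
    lt_of_le_of_ne (hT x (Finset.mem_of_mem_erase hx)) (Finset.ne_of_mem_erase hx)
  have hcyc_a := congrArg (coeff (Finsupp.single v 1 + a)) hcyc
  rw [coeff_koszulBoundary, coeff_zero, Finset.compl_erase,
    Finset.sum_insert (by simpa using hvT), Finset.insert_erase hvT, coeff_X_mul,
    koszulSign_of_forall_lt hlt] at hcyc_a
  rw [coeff_koszulBoundary, Finset.sum_congr rfl fun t ht =>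
      koszulSign_mul_coeff_X_mul_koszulContraction Z hvT ha hT (Finset.mem_compl.mp ht),
    ← Finset.card_erase_add_one hvT, pow_succ]
  linear_combination hcyc_a

theorem koszulBoundary_koszulContraction (Z : Finset (Fin n) → MvPolynomial (Fin n) R)
    (T : Finset (Fin n)) (hcyc : ∀ v ∈ T, koszulBoundary Z (T.erase v) = 0)
    (hZ : coeff 0 (Z T) = 0) :
    koszulBoundary (koszulContraction Z) T = (-1 : R) ^ T.card • Z T := by
  ext a
  rw [coeff_smul, smul_eq_mul]
  rcases (a.support ∪ T).eq_empty_or_nonempty with h | h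
  · obtain ⟨rfl, rfl⟩ : a = 0 ∧ T = ∅ := by simpa [Finset.union_eq_empty] using h
    simp [coeff_koszulBoundary, coeff_X_mul', hZ]
  set v := (a.support ∪ T).max' h
  have hle : ∀ x ∈ a.support ∪ T, x ≤ v := fun x hx => (a.support ∪ T).le_max' x hx
  have ha : ∀ s, v < s → a s = 0 := fun s hs => by
    by_contra has
    exact hs.not_ge (hle s (Finset.mem_union_left _ (Finsupp.mem_support_iff.mpr has)))
  by_cases hvT : v ∈ T
  · exact coeff_koszulBoundary_koszulContraction_of_mem Z hvT ha
      (fun x hx => hle x (Finset.mem_union_right _ hx)) (hcyc v hvT)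
  · have hvA : v ∈ a.support :=
      (Finset.mem_union.mp ((a.support ∪ T).max'_mem h)).resolve_right hvT
    exact coeff_koszulBoundary_koszulContraction_of_notMem Z (Finsupp.mem_support_iff.mp hvA) ha
      fun x hx => lt_of_le_of_ne (hle x (Finset.mem_union_right _ hx)) fun hxv => hvT (hxv ▸ hx)

end KoszulContraction

section Regularity
variable {n d : ℕ} {K : Type} [Field K] {I : Ideal (MvPolynomial (Fin n) K)}

lemma mem_hComp_iff {z : ℤ} (hz : 0 ≤ z) (p : MvPolynomial (Fin n) K) :
    p ∈ hComp I z ↔ p ∈ I ∧ ∀ u ∈ p.support, mdeg u = z.toNat := by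
  rw [hComp, if_pos hz, Submodule.mem_inf, Submodule.restrictScalars_mem,
    homogeneousSubmodule_eq_finsupp_supported, AddMonoidAlgebra.mem_supported]
  rfl

lemma coe_kosD_apply {i : ℕ} {j : ℤ}
    (f : {T : Finset (Fin n) // T.card = i + 1} → hComp I (j - (i + 1)))
    (F : Finset (Fin n) → MvPolynomial (Fin n) K)
    (hF : ∀ S (h : S.card = i + 1), (f ⟨S, h⟩ : MvPolynomial (Fin n) K) = F S)
    (T : {T : Finset (Fin n) // T.card = i}) :
    (kosD I i j f T : MvPolynomial (Fin n) K) = koszulBoundary F T := by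
  rw [kosD, LinearMap.pi_apply, LinearMap.sum_apply, AddSubmonoidClass.coe_finsetSum,
    koszulBoundary, ← Finset.sum_attach (T : Finset (Fin n))ᶜ]
  refine Finset.sum_congr rfl fun t _ => ?_
  rw [LinearMap.smul_apply, SetLike.val_smul, ← hF]
  rfl

lemma StableAboveDegree.koszulContraction_mem (hI : StableAboveDegree d I)
    {Z : Finset (Fin n) → MvPolynomial (Fin n) K} {e : ℤ} (he : (d : ℤ) < e)
    (hZ : ∀ S, Z S ∈ hComp I e) (T : Finset (Fin n)) :
    koszulContraction Z T ∈ hComp I (e - 1) := by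
  rw [koszulContraction]
  split_ifs with hT
  swap
  · exact zero_mem _
  set m := T.max' hT
  set p := Z (T.erase m)
  obtain ⟨hpI, hpdeg⟩ := (mem_hComp_iff (by omega) p).mp (hZ _)
  have hsupp : ∀ a ∈ (filterMonomials (fun a => ∀ s, m < s → a s = 0)
      (divMonomial p (Finsupp.single m 1))).support,
      (∀ s, m < s → a s = 0) ∧ Finsupp.single m 1 + a ∈ p.support := by
    intro a ha
    rw [mem_support_iff, coeff_filterMonomials, coeff_divMonomial] at ha
    split_ifs at ha with hP
    · exact ⟨hP, mem_support_iff.mpr ha⟩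
    · exact absurd rfl ha
  have hdeg : ∀ a ∈ (filterMonomials (fun a => ∀ s, m < s → a s = 0)
      (divMonomial p (Finsupp.single m 1))).support, mdeg a = (e - 1).toNat := by
    intro a ha
    have := hpdeg _ (hsupp a ha).2
    rw [mdeg_add, mdeg_single] at this
    omega
  refine (mem_hComp_iff (by omega) _).mpr ⟨mem_of_forall_monomial_mem fun a ha => ?_, hdeg⟩
  exact hI.2 a m (by have := hdeg a ha; omega) (hsupp a ha).1 (hI.1 p hpI _ (hsupp a ha).2)

lemma StableAboveDegree.bettiKer_le_range (hI : StableAboveDegree d I) {i : ℕ} {j : ℤ}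
    (hij : (d : ℤ) + i < j) : bettiKer I i j ≤ LinearMap.range (kosD I i j) := by
  intro z hz
  let Z : Finset (Fin n) → MvPolynomial (Fin n) K :=
    fun S => if h : S.card = i then z ⟨S, h⟩ else 0
  have hZz : ∀ S (h : S.card = i), Z S = z ⟨S, h⟩ := fun S h => dif_pos h
  have hZmem : ∀ S, Z S ∈ hComp I (j - i) := fun S => by
    by_cases h : S.card = i
    · exact hZz S h ▸ (z _).2
    · simp only [Z, dif_neg h]
      exact zero_mem _
  have hcyc : ∀ T : Finset (Fin n), T.card = i → ∀ v ∈ T,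
      koszulBoundary Z (T.erase v) = 0 := by
    intro T hT v hv
    obtain ⟨i', rfl⟩ := Nat.exists_eq_succ_of_ne_zero (hT ▸ Finset.card_ne_zero_of_mem hv)
    have hcard : (T.erase v).card = i' := by rw [Finset.card_erase_of_mem hv, hT]; rfl
    have hker : kosD I i' j z = 0 := hz
    rw [← coe_kosD_apply z Z (fun S h => (hZz S h).symm) ⟨T.erase v, hcard⟩, hker]
    rfl
  have hZ0 : ∀ T, coeff 0 (Z T) = 0 := fun T => by
    by_contra h
    have := ((mem_hComp_iff (by omega) _).mp (hZmem T)).2 0 (mem_support_iff.mpr h)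
    rw [mdeg_zero] at this
    omega
  let w : {T : Finset (Fin n) // T.card = i + 1} → hComp I (j - (i + 1)) := fun T =>
    ⟨(-1 : K) ^ i • koszulContraction Z T, Submodule.smul_mem _ _ <| by
      rw [sub_add_eq_sub_sub]; exact hI.koszulContraction_mem (by omega) hZmem T⟩
  refine ⟨w, funext fun T => Subtype.ext ?_⟩
  rw [coe_kosD_apply w (fun S => (-1 : K) ^ i • koszulContraction Z S) (fun _ _ => rfl),
    koszulBoundary_smul, koszulBoundary_koszulContraction Z T (hcyc T T.2 · ·) (hZ0 T), T.2,
    smul_smul, ← mul_pow, neg_one_mul, neg_neg, one_pow, one_smul, hZz T T.2]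

lemma betti_eq_zero_of_bettiKer_le_range {i : ℕ} {j : ℤ}
    (h : bettiKer I i j ≤ LinearMap.range (kosD I i j)) : betti I i j = 0 := by
  rw [betti, inf_eq_right.mpr h, Nat.sub_self]

lemma reg_le_of_betti_eq_zero (h : ∀ (i : ℕ) (k : ℤ), (d : ℤ) < k → betti I i (i + k) = 0) :
    reg I ≤ d := by
  rcases Set.eq_empty_or_nonempty {k : ℤ | ∃ i : ℕ, betti I i ((i : ℤ) + k) ≠ 0} with he | hne
  · rw [reg, he, Int.csSup_empty]
    exact Int.natCast_nonneg d
  · exact csSup_le hne fun k ⟨i, hk⟩ => not_lt.mp fun hdk => hk (h i k hdk)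

theorem StableAboveDegree.reg_le (hI : StableAboveDegree d I) : reg I ≤ d :=
  reg_le_of_betti_eq_zero fun _ _ hk =>
    betti_eq_zero_of_bettiKer_le_range (hI.bettiKer_le_range (by omega))

end Regularity

theorem stmt6_general (n d : ℕ) (K : Type) [Field K]
    (I : Ideal (MvPolynomial (Fin n) K)) (hI : DLexIdeal d I) :
    SStableIdeal I ∧ reg I ≤ (d : ℤ) :=
  ⟨hI.sstableIdeal, hI.stableAboveDegree.reg_le⟩

/-- every `d`-lexsegment ideal is strongly stable and `d`-regular. -/
theorem stmt6 (n d : ℕ) (hn : 0 < n) (hd : 0 < d) (K : Type) [Field K]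
    (I : Ideal (MvPolynomial (Fin n) K)) (hI : DLexIdeal d I) :
    SStableIdeal I ∧ reg I ≤ (d : ℤ) :=
  stmt6_general n d K I hI

end Paper
end
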